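/- Let X be a finite pure n-dimensional weighted simplicial complex with n > 1 such that the 1-skeleton of X and the 1-skeletons of all links of X of dimension > 0 are connected. Fix 0 ≤ k ≤ n−2. If there are real numbers κ ≥ λ > 0 such that ⋃_{σ ∈ Σ(k)} Spec(Δ^+_{σ,0}) \ {0} ⊆ [λ, κ], then ⋃_{τ ∈ Σ(k−1)} Spec(Δ^+_{τ,0}) \ {0} ⊆ [2 − 1/λ, 2 − 1/κ]. -/

import Mathlib

open Finset

variable {V : Type} [Fintype V] [DecidableEq V]

/-- A finite abstract simplicial complex on the vertex type `V`. -/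
structure SComplex (V : Type) [Fintype V] [DecidableEq V] where
  faces : Finset (Finset V)
  empty_mem : ∅ ∈ faces
  down_closed : ∀ s ∈ faces, ∀ t, t ⊆ s → t ∈ faces

namespace SComplex

/-- `X` is pure `n`-dimensional: every face is contained in an `n`-dimensional face. -/
def Pure (X : SComplex V) (n : ℕ) : Prop :=
  (∀ s ∈ X.faces, s.card ≤ n + 1) ∧
    ∀ s ∈ X.faces, ∃ t ∈ X.faces, s ⊆ t ∧ t.card = n + 1

/-- `σ` is an ordered simplex with `j` vertices (an element of `Σ(j-1)`). -/
def IsOSimp (X : SComplex V) {j : ℕ} (σ : Fin j → V) : Prop :=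
  Function.Injective σ ∧ Finset.image σ Finset.univ ∈ X.faces

instance {j : ℕ} (X : SComplex V) (σ : Fin j → V) : Decidable (X.IsOSimp σ) := by
  unfold IsOSimp; infer_instance

/-- A balanced, strictly positive weight function on the simplices of `X`. -/
def IsBalanced (X : SComplex V) (n : ℕ) (m : Finset V → ℝ) : Prop :=
  (∀ s ∈ X.faces, 0 < m s) ∧
    ∀ s ∈ X.faces, s.card ≤ n →
      m s = ∑ t ∈ X.faces.filter fun t => s ⊆ t ∧ t.card = s.card + 1, m t

/-- The weight of an ordered tuple (zero off the ordered simplices). -/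
noncomputable def wt (X : SComplex V) (m : Finset V → ℝ) {j : ℕ} (σ : Fin j → V) : ℝ :=
  if X.IsOSimp σ then m (Finset.image σ Finset.univ) else 0

/-- `φ` is a `j`-vertex form, i.e. an element of `C^{j-1}(X,ℝ)`:
antisymmetric and supported on the ordered simplices. -/
def IsForm (X : SComplex V) (j : ℕ) (φ : (Fin j → V) → ℝ) : Prop :=
  (∀ (σ : Fin j → V) (π : Equiv.Perm (Fin j)),
      φ (σ ∘ π) = ((Equiv.Perm.sign π : ℤ) : ℝ) * φ σ) ∧
    ∀ σ : Fin j → V, ¬X.IsOSimp σ → φ σ = 0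

/-- The inner product on `j`-vertex forms (`C^{j-1}(X,ℝ)`). -/
noncomputable def innerF (X : SComplex V) (m : Finset V → ℝ) (j : ℕ)
    (φ ψ : (Fin j → V) → ℝ) : ℝ :=
  ∑ σ : Fin j → V, X.wt m σ / (Nat.factorial j : ℝ) * (φ σ * ψ σ)

/-- The sum of a quantity over all ordered simplices with `j` vertices. -/
noncomputable def sumOSimp (X : SComplex V) (j : ℕ) (F : (Fin j → V) → ℝ) : ℝ :=
  ∑ σ : Fin j → V, if X.IsOSimp σ then F σ else 0

/-- The simplicial differential `d`. -/
def dOp {j : ℕ} (φ : (Fin j → V) → ℝ) : (Fin (j + 1) → V) → ℝ :=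
  fun σ => ∑ i : Fin (j + 1), (-1 : ℝ) ^ (i : ℕ) * φ (σ ∘ i.succAbove)

/-- The codifferential `δ` (the adjoint of `d`). -/
noncomputable def deltaOp (X : SComplex V) (m : Finset V → ℝ) {j : ℕ}
    (φ : (Fin (j + 1) → V) → ℝ) : (Fin j → V) → ℝ :=
  fun τ => ∑ v : V, X.wt m (Fin.cons v τ) / X.wt m τ * φ (Fin.cons v τ)

/-- The upper Laplacian `Δ⁺` on `j`-vertex forms (`C^{j-1}`). -/
noncomputable def lapPlus (X : SComplex V) (m : Finset V → ℝ) (j : ℕ)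
    (φ : (Fin j → V) → ℝ) : (Fin j → V) → ℝ :=
  X.deltaOp m (dOp φ)

/-- The lower Laplacian `Δ⁻` on `(j+1)`-vertex forms (`C^j`). -/
noncomputable def lapMinus (X : SComplex V) (m : Finset V → ℝ) (j : ℕ)
    (φ : (Fin (j + 1) → V) → ℝ) : (Fin (j + 1) → V) → ℝ :=
  dOp (X.deltaOp m φ)

/-- The set of eigenvalues of `Δ⁺` on `j`-vertex forms. -/
def specLapPlus (X : SComplex V) (m : Finset V → ℝ) (j : ℕ) : Set ℝ :=
  {μ | ∃ φ : (Fin j → V) → ℝ, X.IsForm j φ ∧ φ ≠ 0 ∧ X.lapPlus m j φ = μ • φ}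

/-- The set of eigenvalues of `Δ⁻` on `(j+1)`-vertex forms (`C^j`). -/
def specLapMinus (X : SComplex V) (m : Finset V → ℝ) (j : ℕ) : Set ℝ :=
  {μ | ∃ φ : (Fin (j + 1) → V) → ℝ, X.IsForm (j + 1) φ ∧ φ ≠ 0 ∧ X.lapMinus m j φ = μ • φ}

/-- The link of a face `s`. -/
def link (X : SComplex V) (s : Finset V) : SComplex V where
  faces := insert ∅ (X.faces.filter fun t => Disjoint s t ∧ s ∪ t ∈ X.faces)
  empty_mem := Finset.mem_insert_self _ _
  down_closed := by
    intro a ha t hts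
    rcases Finset.mem_insert.mp ha with h | h
    · refine Finset.mem_insert.mpr (Or.inl ?_)
      subst h; exact Finset.subset_empty.mp hts
    · rw [Finset.mem_filter] at h
      refine Finset.mem_insert.mpr (Or.inr (Finset.mem_filter.mpr
        ⟨X.down_closed a h.1 t hts, Disjoint.mono_right hts h.2.1,
          X.down_closed _ h.2.2 _ (Finset.union_subset_union (Finset.Subset.refl s) hts)⟩))

/-- The induced (balanced) weight on the link of `s`. -/
def linkWt (m : Finset V → ℝ) (s : Finset V) : Finset V → ℝ := fun t => m (s ∪ t)

/-- The graph given by the 1-skeleton of `X`. -/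
def skeleton (X : SComplex V) : SimpleGraph V where
  Adj u v := u ≠ v ∧ ({u, v} : Finset V) ∈ X.faces
  symm := by
    constructor
    intro u v h
    exact ⟨h.1.symm, by rw [Finset.pair_comm]; exact h.2⟩
  loopless := ⟨fun u h => h.1 rfl⟩

/-- The 1-skeleton of `X` is connected (on the vertices of `X`). -/
def SkelConnected (X : SComplex V) : Prop :=
  ∀ u v : V, ({u} : Finset V) ∈ X.faces → ({v} : Finset V) ∈ X.faces →
    X.skeleton.Reachable u v

/-- The 1-skeleton of `X` and the 1-skeletons of all links of `X` of dimension `> 0`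
are connected. -/
def AllLinksConnected (X : SComplex V) (n : ℕ) : Prop :=
  X.SkelConnected ∧ ∀ s ∈ X.faces, s.card < n → (X.link s).SkelConnected

/-- The localization `φ_τ ∈ C⁰(X_τ)` of a `(k+1)`-vertex form `φ` at an ordered
`k`-vertex simplex `τ`. -/
def localize {k : ℕ} (φ : (Fin (k + 1) → V) → ℝ) (τ : Fin k → V) : (Fin 1 → V) → ℝ :=
  fun σ => φ (Fin.append τ σ)

/-- The restriction of a cochain to the subcomplex `Y` (truncating off `Y`). -/
def restrict (Y : SComplex V) {j : ℕ} (φ : (Fin j → V) → ℝ) : (Fin j → V) → ℝ :=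
  fun σ => if Y.IsOSimp σ then φ σ else 0

/-- `S` is an `(n+1)`-partition of `X`: the vertices of `X` are partitioned into the
sides `S i`, and every edge joins two distinct sides. -/
def IsPartition (X : SComplex V) (n : ℕ) (S : Fin (n + 1) → Finset V) : Prop :=
  (∀ i, ∀ v ∈ S i, ({v} : Finset V) ∈ X.faces) ∧
    (∀ v : V, ({v} : Finset V) ∈ X.faces → ∃! i, v ∈ S i) ∧
    ∀ u v : V, u ≠ v → ({u, v} : Finset V) ∈ X.faces → ∀ i, u ∈ S i → v ∉ S i

/-- The side differential `d_{(k,j)}` with respect to the side `S`. -/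
def dSide (S : Finset V) {j : ℕ} (φ : (Fin j → V) → ℝ) : (Fin (j + 1) → V) → ℝ :=
  fun σ => ∑ i : Fin (j + 1),
    if σ i ∈ S then (-1 : ℝ) ^ (i : ℕ) * φ (σ ∘ i.succAbove) else 0

/-- The adjoint `δ_{(k,j)}` of the side differential. -/
noncomputable def deltaSide (X : SComplex V) (m : Finset V → ℝ) (S : Finset V) {j : ℕ}
    (φ : (Fin (j + 1) → V) → ℝ) : (Fin j → V) → ℝ :=
  fun τ => ∑ v ∈ S, X.wt m (Fin.cons v τ) / X.wt m τ * φ (Fin.cons v τ)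

/-- The side lower Laplacian `Δ⁻_{(k,j)}` on `(j+1)`-vertex forms (`C^j`). -/
noncomputable def lapMinusSide (X : SComplex V) (m : Finset V → ℝ) (S : Finset V) (j : ℕ)
    (φ : (Fin (j + 1) → V) → ℝ) : (Fin (j + 1) → V) → ℝ :=
  dSide S (X.deltaSide m S φ)

end SComplex

open SComplex

/-!
Garland's method. Let `f` be an eigenfunction of `Δ⁺₀` on the link `Y` of `τ` with eigenvalue
`μ ≠ 0`. For each vertex `v` of `Y`, the function `u ↦ f u + (μ - 1) f v` on the link of `v` is
orthogonal to the constants there, so the spectral gap of that link traps its energy between `λ`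
and `κ` times its squared norm. Summed over `v`, balancedness turns the energies into `μ ‖f‖²` and
the squared norms into `(2 - μ) μ ‖f‖²`, whence `λ (2 - μ) ≤ 1 ≤ κ (2 - μ)`. The local bounds come
from the spectral theorem for the normalised Laplacian `D^{-1/2} L D^{-1/2}` of the link: since the
link is connected, its kernel is orthogonal to `D^{1/2} g` whenever `g` is orthogonal to the
constants.
-/

open scoped RealInnerProductSpace

namespace LinearMap.IsSymmetric

variable {E : Type*} [NormedAddCommGroup E] [InnerProductSpace ℝ E] [FiniteDimensional ℝ E]
  {T : E →ₗ[ℝ] E}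

theorem inner_map_self_eq_sum_eigenvalues (hT : T.IsSymmetric) (x : E) :
    ⟪T x, x⟫ = ∑ i, hT.eigenvalues rfl i * ⟪hT.eigenvectorBasis rfl i, x⟫ ^ 2 := by
  rw [← (hT.eigenvectorBasis rfl).sum_inner_mul_inner]
  refine sum_congr rfl fun i _ => ?_
  rw [hT, apply_eigenvectorBasis, real_inner_smul_right, real_inner_comm x,
    RCLike.ofReal_real_eq_id, id_eq, sq, mul_assoc]

theorem inner_self_eq_sum_eigenvectorBasis (hT : T.IsSymmetric) (x : E) :
    ⟪x, x⟫ = ∑ i, ⟪hT.eigenvectorBasis rfl i, x⟫ ^ 2 := by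
  rw [← (hT.eigenvectorBasis rfl).sum_inner_mul_inner]
  simp_rw [real_inner_comm x, sq]

theorem inner_map_self_le_of_hasEigenvalue_le (hT : T.IsSymmetric) {kap : ℝ}
    (h : ∀ μ, Module.End.HasEigenvalue T μ → μ ≤ kap) (x : E) :
    ⟪T x, x⟫ ≤ kap * ⟪x, x⟫ := by
  rw [hT.inner_map_self_eq_sum_eigenvalues, hT.inner_self_eq_sum_eigenvectorBasis, mul_sum]
  gcongr with i
  exact h _ (hT.hasEigenvalue_eigenvalues rfl i)

theorem le_inner_map_self_of_mem_ker_orthogonal (hT : T.IsSymmetric) {lam : ℝ}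
    (h : ∀ μ, Module.End.HasEigenvalue T μ → μ ≠ 0 → lam ≤ μ) {x : E}
    (hx : x ∈ (LinearMap.ker T)ᗮ) :
    lam * ⟪x, x⟫ ≤ ⟪T x, x⟫ := by
  rw [hT.inner_map_self_eq_sum_eigenvalues, hT.inner_self_eq_sum_eigenvectorBasis, mul_sum]
  refine sum_le_sum fun i _ => ?_
  by_cases hμ : hT.eigenvalues rfl i = 0
  · have hker : hT.eigenvectorBasis rfl i ∈ LinearMap.ker T := by
      rw [LinearMap.mem_ker, apply_eigenvectorBasis, hμ, RCLike.ofReal_zero, zero_smul]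
    simp [Submodule.inner_right_of_mem_orthogonal hker hx]
  · gcongr
    exact h _ (hT.hasEigenvalue_eigenvalues rfl i) hμ

end LinearMap.IsSymmetric

namespace WeightedGraph

variable {α : Type*} [Fintype α]

def deg (a : α → α → ℝ) (u : α) : ℝ := ∑ v, a u v

def lap (a : α → α → ℝ) (g : α → ℝ) (u : α) : ℝ := ∑ v, a u v * (g u - g v)

def energy (a : α → α → ℝ) (g : α → ℝ) : ℝ := ∑ u, lap a g u * g u

def normSq (a : α → α → ℝ) (g : α → ℝ) : ℝ := ∑ u, deg a u * g u ^ 2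

/-- The eigenvalues of the random-walk Laplacian `D⁻¹ L` acting on functions on the
non-isolated vertices. -/
def spec (a : α → α → ℝ) : Set ℝ :=
  {μ | ∃ g : α → ℝ, (∃ u, deg a u ≠ 0 ∧ g u ≠ 0) ∧
    ∀ u, lap a g u = μ * (deg a u * g u)}

def Connected (a : α → α → ℝ) : Prop :=
  ∀ u v, deg a u ≠ 0 → deg a v ≠ 0 → Relation.ReflTransGen (fun x y => a x y ≠ 0) u v

variable {a : α → α → ℝ}

theorem deg_nonneg (hnn : ∀ u v, 0 ≤ a u v) (u : α) : 0 ≤ deg a u :=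
  sum_nonneg fun v _ => hnn u v

theorem eq_zero_of_deg_eq_zero (hnn : ∀ u v, 0 ≤ a u v) {u : α} (hu : deg a u = 0) (v : α) :
    a u v = 0 :=
  (sum_eq_zero_iff_of_nonneg fun v _ => hnn u v).mp hu v (mem_univ v)

theorem sqrt_deg_ne_zero (hnn : ∀ u v, 0 ≤ a u v) {u : α} (hu : deg a u ≠ 0) :
    √(deg a u) ≠ 0 :=
  Real.sqrt_ne_zero'.mpr (lt_of_le_of_ne (deg_nonneg hnn u) (Ne.symm hu))

theorem lap_eq_zero_of_deg_eq_zero (hnn : ∀ u v, 0 ≤ a u v) {u : α} (hu : deg a u = 0)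
    (g : α → ℝ) : lap a g u = 0 := by
  simp [lap, eq_zero_of_deg_eq_zero hnn hu]

theorem lap_eq_sub (g : α → ℝ) (u : α) : lap a g u = deg a u * g u - ∑ v, a u v * g v := by
  simp only [lap, deg, mul_sub, sum_sub_distrib, sum_mul]

theorem lap_congr (hsymm : ∀ u v, a u v = a v u) (hnn : ∀ u v, 0 ≤ a u v) {g g' : α → ℝ}
    (h : ∀ v, deg a v ≠ 0 → g v = g' v) {u : α} (hu : deg a u ≠ 0) :
    lap a g u = lap a g' u := by
  refine sum_congr rfl fun v _ => ?_
  by_cases huv : a u v = 0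
  · rw [huv, zero_mul, zero_mul]
  · have hv : deg a v ≠ 0 := fun hv => huv (by rw [hsymm]; exact eq_zero_of_deg_eq_zero hnn hv u)
    rw [h u hu, h v hv]

theorem two_mul_energy (hsymm : ∀ u v, a u v = a v u) (g : α → ℝ) :
    2 * energy a g = ∑ u, ∑ v, a u v * (g u - g v) ^ 2 := by
  have hswap : energy a g = ∑ u, ∑ v, a u v * (g v - g u) * g v := by
    rw [energy, sum_comm]
    simp only [lap, sum_mul, hsymm]
  rw [two_mul]
  nth_rewrite 1 [energy]
  rw [hswap]
  simp only [lap, sum_mul, ← sum_add_distrib]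
  exact sum_congr rfl fun u _ => sum_congr rfl fun v _ => by ring

theorem energy_nonneg (hsymm : ∀ u v, a u v = a v u) (hnn : ∀ u v, 0 ≤ a u v)
    (g : α → ℝ) : 0 ≤ energy a g := by
  have := two_mul_energy hsymm g
  have : 0 ≤ ∑ u, ∑ v, a u v * (g u - g v) ^ 2 :=
    sum_nonneg fun u _ => sum_nonneg fun v _ => mul_nonneg (hnn u v) (sq_nonneg _)
  linarith

theorem eq_of_energy_eq_zero (hsymm : ∀ u v, a u v = a v u) (hnn : ∀ u v, 0 ≤ a u v)
    {g : α → ℝ} (hg : energy a g = 0) {u v : α} (huv : a u v ≠ 0) : g u = g v := by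
  have hnn' : ∀ u v, 0 ≤ a u v * (g u - g v) ^ 2 :=
    fun u v => mul_nonneg (hnn u v) (sq_nonneg _)
  have hsum : ∑ u, ∑ v, a u v * (g u - g v) ^ 2 = 0 := by
    rw [← two_mul_energy hsymm, hg, mul_zero]
  rw [sum_eq_zero_iff_of_nonneg fun u _ => sum_nonneg fun v _ => hnn' u v] at hsum
  have hterm := (sum_eq_zero_iff_of_nonneg fun v _ => hnn' u v).mp (hsum u (mem_univ u)) v
    (mem_univ v)
  have := (mul_eq_zero.mp hterm).resolve_left huv
  linarith [pow_eq_zero_iff (n := 2) two_ne_zero |>.mp this]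

theorem Connected.eq_of_energy_eq_zero (hconn : Connected a) (hsymm : ∀ u v, a u v = a v u)
    (hnn : ∀ u v, 0 ≤ a u v) {g : α → ℝ} (hg : energy a g = 0) {u v : α}
    (hu : deg a u ≠ 0) (hv : deg a v ≠ 0) : g u = g v := by
  have hreach := hconn u v hu hv
  clear hv
  induction hreach with
  | refl => rfl
  | tail _ hxy ih => exact ih.trans (WeightedGraph.eq_of_energy_eq_zero hsymm hnn hg hxy)

theorem normSq_pos (hnn : ∀ u v, 0 ≤ a u v) {g : α → ℝ} {u : α} (hu : deg a u ≠ 0)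
    (hgu : g u ≠ 0) : 0 < normSq a g :=
  sum_pos' (fun v _ => mul_nonneg (deg_nonneg hnn v) (sq_nonneg _))
    ⟨u, mem_univ u, mul_pos (lt_of_le_of_ne (deg_nonneg hnn u) (Ne.symm hu)) (by positivity)⟩

theorem energy_eq_of_lap_eq {μ : ℝ} {f : α → ℝ}
    (hf : ∀ u, lap a f u = μ * (deg a u * f u)) : energy a f = μ * normSq a f := by
  simp only [energy, normSq, hf, mul_sum]
  exact sum_congr rfl fun u _ => by ring

theorem sum_sum_mul_add_mul_sq_of_lap_eq (hsymm : ∀ u v, a u v = a v u) {μ : ℝ}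
    {f : α → ℝ} (hf : ∀ u, lap a f u = μ * (deg a u * f u)) :
    ∑ v, ∑ u, a v u * (f u + (μ - 1) * f v) ^ 2 = (2 - μ) * (μ * normSq a f) := by
  have hexp : ∀ v, ∑ u, a v u * (f u + (μ - 1) * f v) ^ 2 = ∑ u, a v u * (f v - f u) ^ 2
      - 2 * μ * (lap a f v * f v) + μ ^ 2 * (deg a v * f v ^ 2) := by
    intro v
    simp only [lap, deg, sum_mul, mul_sum, ← sum_sub_distrib, ← sum_add_distrib]
    exact sum_congr rfl fun u _ => by ring
  rw [sum_congr rfl fun v _ => hexp v, sum_add_distrib, sum_sub_distrib, ← mul_sum, ← mul_sum,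
    ← two_mul_energy hsymm]
  change 2 * energy a f - 2 * μ * energy a f + μ ^ 2 * normSq a f = _
  rw [energy_eq_of_lap_eq hf]
  ring

theorem sum_mul_add_mul_eq_zero_of_lap_eq {μ : ℝ} {f : α → ℝ}
    (hf : ∀ u, lap a f u = μ * (deg a u * f u)) (v : α) :
    ∑ u, a v u * (f u + (μ - 1) * f v) = 0 := by
  have := hf v
  have hdeg : deg a v = ∑ u, a v u := rfl
  rw [lap_eq_sub] at this
  simp only [mul_add, sum_add_distrib, ← sum_mul]
  linear_combination -this - (μ - 1) * f v * hdeg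

noncomputable def toEuclidean (a : α → α → ℝ) (g : α → ℝ) : EuclideanSpace ℝ α :=
  WithLp.toLp 2 fun u => √(deg a u) * g u

theorem inner_toEuclidean_self (hnn : ∀ u v, 0 ≤ a u v) (g : α → ℝ) :
    ⟪toEuclidean a g, toEuclidean a g⟫ = normSq a g := by
  simp only [toEuclidean, EuclideanSpace.inner_toLp_toLp, dotProduct, star_trivial, normSq]
  refine sum_congr rfl fun u _ => ?_
  linear_combination g u ^ 2 * Real.mul_self_sqrt (deg_nonneg hnn u)

section NormalizedLaplacian

variable [DecidableEq α]

/-- `D^{-1/2} (D - A) D^{-1/2}`. Rows and columns of isolated vertices vanish, since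
`√0 = 0` and `x / 0 = 0`. -/
noncomputable def normLap (a : α → α → ℝ) : Matrix α α ℝ :=
  fun u v => ((if u = v then deg a u else 0) - a u v) / (√(deg a u) * √(deg a v))

theorem normLap_isHermitian (hsymm : ∀ u v, a u v = a v u) : (normLap a).IsHermitian := by
  ext u v
  simp only [Matrix.conjTranspose_apply, star_trivial, normLap, hsymm v u, mul_comm (√(deg a v))]
  by_cases huv : u = v
  · subst huv; rfl
  · simp [huv, Ne.symm huv]

theorem normLap_isSymmetric (hsymm : ∀ u v, a u v = a v u) :
    (normLap a).toEuclideanLin.IsSymmetric :=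
  Matrix.isSymmetric_toEuclideanLin_iff.mpr (normLap_isHermitian hsymm)

theorem normLap_mulVec_sqrt_deg_mul (hsymm : ∀ u v, a u v = a v u) (hnn : ∀ u v, 0 ≤ a u v)
    (g : α → ℝ) :
    (normLap a).mulVec (fun v => √(deg a v) * g v) = fun u => lap a g u / √(deg a u) := by
  ext u
  have hterm : ∀ v, normLap a u v * (√(deg a v) * g v)
      = ((if u = v then deg a u else 0) - a u v) * g v / √(deg a u) := by
    intro v
    by_cases hv : deg a v = 0
    · have hav : a u v = 0 := by rw [hsymm]; exact eq_zero_of_deg_eq_zero hnn hv u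
      by_cases huv : u = v
      · subst huv; simp [normLap, hv]
      · simp [normLap, hv, huv, hav]
    · have := sqrt_deg_ne_zero hnn hv
      simp only [normLap]
      field_simp
  simp only [Matrix.mulVec, dotProduct, hterm, ← sum_div, sub_mul, sum_sub_distrib, ite_mul,
    zero_mul, sum_ite_eq, mem_univ, if_true, lap_eq_sub]

theorem normLap_mulVec (hsymm : ∀ u v, a u v = a v u) (hnn : ∀ u v, 0 ≤ a u v)
    (h : α → ℝ) :
    (normLap a).mulVec h = fun u => lap a (fun v => h v / √(deg a v)) u / √(deg a u) := by
  rw [← normLap_mulVec_sqrt_deg_mul hsymm hnn]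
  ext u
  refine sum_congr rfl fun v _ => ?_
  by_cases hv : deg a v = 0
  · simp [normLap, hv]
  · simp only [mul_div_cancel₀ _ (sqrt_deg_ne_zero hnn hv)]

theorem inner_normLap_toEuclidean (hsymm : ∀ u v, a u v = a v u) (hnn : ∀ u v, 0 ≤ a u v)
    (g : α → ℝ) :
    ⟪(normLap a).toEuclideanLin (toEuclidean a g), toEuclidean a g⟫ = energy a g := by
  simp only [toEuclidean, Matrix.toLpLin_toLp, Matrix.toLin'_apply,
    normLap_mulVec_sqrt_deg_mul hsymm hnn, EuclideanSpace.inner_toLp_toLp, dotProduct,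
    star_trivial, energy]
  refine sum_congr rfl fun u _ => ?_
  by_cases hu : deg a u = 0
  · simp [hu, lap_eq_zero_of_deg_eq_zero hnn hu]
  · field_simp [sqrt_deg_ne_zero hnn hu]

theorem mem_spec_of_hasEigenvalue (hsymm : ∀ u v, a u v = a v u) (hnn : ∀ u v, 0 ≤ a u v)
    {μ : ℝ} (hμ : Module.End.HasEigenvalue (normLap a).toEuclideanLin μ) (hμ0 : μ ≠ 0) :
    μ ∈ spec a := by
  obtain ⟨h, hh⟩ := hμ.exists_hasEigenvector
  have hpt : ∀ u, lap a (fun v => h v / √(deg a v)) u / √(deg a u) = μ * h u := fun u =>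
    calc _ = ((normLap a).toEuclideanLin h) u := by
            rw [Matrix.toLpLin_apply, normLap_mulVec hsymm hnn]
      _ = μ * h u := by rw [hh.apply_eq_smul]; rfl
  have hzero : ∀ u, deg a u = 0 → h u = 0 := fun u hu => by
    simpa [hu, hμ0] using (hpt u).symm
  obtain ⟨u, hu⟩ : ∃ u, h u ≠ 0 := by
    by_contra! hall
    exact hh.2 (PiLp.ext hall)
  have hdu : deg a u ≠ 0 := fun h0 => hu (hzero u h0)
  refine ⟨fun v => h v / √(deg a v), ⟨u, hdu, div_ne_zero hu (sqrt_deg_ne_zero hnn hdu)⟩,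
    fun v => ?_⟩
  by_cases hdv : deg a v = 0
  · simp [lap_eq_zero_of_deg_eq_zero hnn hdv, hdv]
  · have hs := sqrt_deg_ne_zero hnn hdv
    have := hpt v
    rw [div_eq_iff hs] at this
    rw [this]
    field_simp
    linear_combination h v * Real.mul_self_sqrt (deg_nonneg hnn v)

theorem lap_eq_zero_of_mem_ker (hsymm : ∀ u v, a u v = a v u) (hnn : ∀ u v, 0 ≤ a u v)
    {h : EuclideanSpace ℝ α} (hh : h ∈ LinearMap.ker (normLap a).toEuclideanLin) (u : α) :
    lap a (fun v => h v / √(deg a v)) u = 0 := by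
  have := congrFun (congrArg WithLp.ofLp (LinearMap.mem_ker.mp hh)) u
  rw [Matrix.ofLp_toLpLin, Matrix.toLin'_apply, normLap_mulVec hsymm hnn] at this
  by_cases hu : deg a u = 0
  · exact lap_eq_zero_of_deg_eq_zero hnn hu _
  · simpa [sqrt_deg_ne_zero hnn hu] using this

theorem toEuclidean_mem_ker_orthogonal (hsymm : ∀ u v, a u v = a v u) (hnn : ∀ u v, 0 ≤ a u v)
    (hconn : Connected a) {g : α → ℝ} (hg : ∑ u, deg a u * g u = 0) :
    toEuclidean a g ∈ (LinearMap.ker (normLap a).toEuclideanLin)ᗮ := by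
  refine (Submodule.mem_orthogonal _ _).mpr fun h hh => ?_
  set f : α → ℝ := fun v => h v / √(deg a v)
  have hlap : ∀ u, lap a f u = 0 := lap_eq_zero_of_mem_ker hsymm hnn hh
  have henergy : energy a f = 0 := by simp [energy, hlap]
  have hterm : ∀ u, h u * (√(deg a u) * g u) = deg a u * g u * f u := fun u => by
    by_cases hu : deg a u = 0
    · simp [hu]
    · have hs := sqrt_deg_ne_zero hnn hu
      simp only [f]
      field_simp
      linear_combination h u * g u * Real.mul_self_sqrt (deg_nonneg hnn u)
  simp only [toEuclidean, EuclideanSpace.inner_eq_star_dotProduct, dotProduct, star_trivial,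
    mul_comm _ (h _), hterm]
  by_cases hex : ∃ u₀, deg a u₀ ≠ 0
  · obtain ⟨u₀, hu₀⟩ := hex
    calc ∑ u, deg a u * g u * f u = ∑ u, deg a u * g u * f u₀ := sum_congr rfl fun u _ => by
            by_cases hu : deg a u = 0
            · simp [hu]
            · rw [hconn.eq_of_energy_eq_zero hsymm hnn henergy hu hu₀]
      _ = 0 := by rw [← sum_mul, hg, zero_mul]
  · simp only [not_exists, not_not] at hex
    simp [hex]

end NormalizedLaplacian

theorem energy_le_of_spec_subset_Iic (hsymm : ∀ u v, a u v = a v u) (hnn : ∀ u v, 0 ≤ a u v)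
    {kap : ℝ} (hkap : 0 ≤ kap) (hspec : spec a \ {0} ⊆ Set.Iic kap) (g : α → ℝ) :
    energy a g ≤ kap * normSq a g := by
  classical
  have := (normLap_isSymmetric hsymm).inner_map_self_le_of_hasEigenvalue_le (kap := kap)
    (fun μ hμ => ?_) (toEuclidean a g)
  · rwa [inner_normLap_toEuclidean hsymm hnn, inner_toEuclidean_self hnn] at this
  · rcases eq_or_ne μ 0 with rfl | hμ0
    · exact hkap
    · exact hspec ⟨mem_spec_of_hasEigenvalue hsymm hnn hμ hμ0, hμ0⟩

theorem le_energy_of_spec_subset_Ici (hsymm : ∀ u v, a u v = a v u) (hnn : ∀ u v, 0 ≤ a u v)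
    (hconn : Connected a) {lam : ℝ} (hspec : spec a \ {0} ⊆ Set.Ici lam) {g : α → ℝ}
    (hg : ∑ u, deg a u * g u = 0) :
    lam * normSq a g ≤ energy a g := by
  classical
  have := (normLap_isSymmetric hsymm).le_inner_map_self_of_mem_ker_orthogonal
    (fun μ hμ hμ0 => hspec ⟨mem_spec_of_hasEigenvalue hsymm hnn hμ hμ0, hμ0⟩)
    (toEuclidean_mem_ker_orthogonal hsymm hnn hconn hg)
  rwa [inner_normLap_toEuclidean hsymm hnn, inner_toEuclidean_self hnn] at this

section Links

variable {c : α → α → α → ℝ}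

theorem deg_comm_of_swap (hswap : ∀ v u x, c v u x = c u v x) (u x : α) :
    deg (c u) x = deg (c x) u := by
  simp only [deg, hswap u x]

theorem sum_energy_shift (hswap : ∀ v u x, c v u x = c u v x)
    (hcomm : ∀ v u x, c v u x = c v x u) (f t : α → ℝ) :
    ∑ v, energy (c v) (fun u => f u + t v) = energy (fun u => deg (c u)) f := by
  suffices 2 * ∑ v, energy (c v) (fun u => f u + t v) = 2 * energy (fun u => deg (c u)) f by
    linarith
  rw [mul_sum, two_mul_energy (deg_comm_of_swap hswap)]
  simp only [two_mul_energy (hcomm _), add_sub_add_right_eq_sub, deg, sum_mul]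
  rw [sum_comm]
  refine sum_congr rfl fun u _ => ?_
  rw [sum_comm]
  exact sum_congr rfl fun x _ => sum_congr rfl fun v _ => by rw [hswap, hcomm]

theorem spec_diff_zero_subset_of_links (hnn : ∀ v u x, 0 ≤ c v u x)
    (hswap : ∀ v u x, c v u x = c u v x) (hcomm : ∀ v u x, c v u x = c v x u)
    {lam kap : ℝ} (hlam : 0 < lam) (hlk : lam ≤ kap)
    (hconn : ∀ v, c v ≠ 0 → Connected (c v))
    (hgap : ∀ v, c v ≠ 0 → spec (c v) \ {0} ⊆ Set.Icc lam kap) :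
    spec (fun u => deg (c u)) \ {0} ⊆ Set.Icc (2 - 1 / lam) (2 - 1 / kap) := by
  rintro μ ⟨⟨f, ⟨u₀, hu₀, hfu₀⟩, hf⟩, hμ0⟩
  have hsymm := deg_comm_of_swap hswap
  have hnn' : ∀ u x, 0 ≤ deg (c u) x := fun u => deg_nonneg (hnn u)
  set N := normSq (fun u => deg (c u)) f
  have hN : 0 < N := normSq_pos hnn' hu₀ hfu₀
  have hE := energy_eq_of_lap_eq hf
  have hμN : 0 < μ * N := by
    refine mul_pos (lt_of_le_of_ne ?_ (Ne.symm (by simpa using hμ0))) hN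
    exact nonneg_of_mul_nonneg_left (hE ▸ energy_nonneg hsymm hnn' f) hN
  -- The localisation of `f` at `v`, shifted to be orthogonal to the constants on the link of `v`.
  set G : α → α → ℝ := fun v u => f u + (μ - 1) * f v
  have hsumE : ∑ v, energy (c v) (G v) = μ * N := by rw [sum_energy_shift hswap hcomm, hE]
  have hsumN : ∑ v, normSq (c v) (G v) = (2 - μ) * (μ * N) :=
    sum_sum_mul_add_mul_sq_of_lap_eq hsymm hf
  have hlocal : ∀ v, lam * normSq (c v) (G v) ≤ energy (c v) (G v) ∧
      energy (c v) (G v) ≤ kap * normSq (c v) (G v) := fun v => by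
    by_cases hv : c v = 0
    · simp [hv, energy, normSq, lap, deg]
    exact ⟨le_energy_of_spec_subset_Ici (hcomm v) (hnn v) (hconn v hv)
        ((hgap v hv).trans Set.Icc_subset_Ici_self) (sum_mul_add_mul_eq_zero_of_lap_eq hf v),
      energy_le_of_spec_subset_Iic (hcomm v) (hnn v) (hlam.le.trans hlk)
        ((hgap v hv).trans Set.Icc_subset_Iic_self) (G v)⟩
  have hlow : lam * (2 - μ) * (μ * N) ≤ 1 * (μ * N) := by
    rw [mul_assoc, one_mul, ← hsumN, ← hsumE, mul_sum]
    exact sum_le_sum fun v _ => (hlocal v).1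
  have hup : 1 * (μ * N) ≤ kap * (2 - μ) * (μ * N) := by
    rw [mul_assoc, one_mul, ← hsumN, ← hsumE, mul_sum]
    exact sum_le_sum fun v _ => (hlocal v).2
  constructor
  · rw [sub_le_comm, le_div_iff₀ hlam, mul_comm]
    exact le_of_mul_le_mul_right hlow hμN
  · rw [le_sub_comm, div_le_iff₀ (hlam.trans_le hlk), mul_comm]
    exact le_of_mul_le_mul_right hup hμN

end Links

end WeightedGraph

theorem image_univ_cons {W : Type} [DecidableEq W] {k : ℕ} (v : W) (τ : Fin k → W) :
    image (Fin.cons v τ : Fin (k + 1) → W) univ = insert v (image τ univ) := by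
  ext x
  simp [Fin.exists_fin_succ, eq_comm]

namespace SComplex

open WeightedGraph (deg lap spec)

def edgeWt (Z : SComplex V) (mZ : Finset V → ℝ) (u v : V) : ℝ :=
  if u ≠ v ∧ ({u, v} : Finset V) ∈ Z.faces then mZ {u, v} else 0

def IsVertexBalanced (Z : SComplex V) (mZ : Finset V → ℝ) : Prop :=
  ∀ u, ({u} : Finset V) ∈ Z.faces → mZ {u} = deg (Z.edgeWt mZ) u

section EdgeWeights

variable {Z : SComplex V} {mZ : Finset V → ℝ}

theorem edgeWt_comm (Z : SComplex V) (mZ : Finset V → ℝ) (u v : V) :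
    Z.edgeWt mZ u v = Z.edgeWt mZ v u := by
  simp only [edgeWt, ne_comm, pair_comm u v]

theorem edgeWt_nonneg (hpos : ∀ t ∈ Z.faces, 0 < mZ t) (u v : V) : 0 ≤ Z.edgeWt mZ u v := by
  unfold edgeWt
  split_ifs with h
  exacts [(hpos _ h.2).le, le_rfl]

theorem deg_edgeWt_eq_zero (Z : SComplex V) (mZ : Finset V → ℝ) {u : V}
    (hu : ({u} : Finset V) ∉ Z.faces) : deg (Z.edgeWt mZ) u = 0 :=
  sum_eq_zero fun _ _ => if_neg fun h => hu (Z.down_closed _ h.2 _ (by simp))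

theorem IsVertexBalanced.deg_edgeWt (hbal : Z.IsVertexBalanced mZ) (u : V) :
    deg (Z.edgeWt mZ) u = if ({u} : Finset V) ∈ Z.faces then mZ {u} else 0 := by
  split_ifs with hu
  exacts [(hbal u hu).symm, Z.deg_edgeWt_eq_zero mZ hu]

theorem IsVertexBalanced.deg_edgeWt_ne_zero_iff (hpos : ∀ t ∈ Z.faces, 0 < mZ t)
    (hbal : Z.IsVertexBalanced mZ) {u : V} :
    deg (Z.edgeWt mZ) u ≠ 0 ↔ ({u} : Finset V) ∈ Z.faces := by
  rw [hbal.deg_edgeWt]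
  split_ifs with hu
  · simp [hu, (hpos _ hu).ne']
  · simp [hu]

theorem SkelConnected.connected_edgeWt (hpos : ∀ t ∈ Z.faces, 0 < mZ t)
    (hconn : Z.SkelConnected) : WeightedGraph.Connected (Z.edgeWt mZ) := by
  have hvert : ∀ u, deg (Z.edgeWt mZ) u ≠ 0 → ({u} : Finset V) ∈ Z.faces :=
    fun u hu => not_not.mp fun h => hu (Z.deg_edgeWt_eq_zero mZ h)
  intro u v hu hv
  have hreach := (SimpleGraph.reachable_iff_reflTransGen u v).mp
    (hconn u v (hvert u hu) (hvert v hv))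
  refine Relation.ReflTransGen.mono (fun x y hxy => ?_) _ _ hreach
  rw [edgeWt, if_pos (show x ≠ y ∧ _ from hxy)]
  exact (hpos _ hxy.2).ne'

theorem isOSimp_const_iff (Z : SComplex V) (u : V) :
    Z.IsOSimp (Function.const (Fin 1) u) ↔ ({u} : Finset V) ∈ Z.faces := by
  simp [IsOSimp, Function.injective_of_subsingleton]

theorem wt_const (Z : SComplex V) (mZ : Finset V → ℝ) (u : V) :
    Z.wt mZ (Function.const (Fin 1) u) = if ({u} : Finset V) ∈ Z.faces then mZ {u} else 0 := by
  simp [wt, isOSimp_const_iff]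

theorem wt_cons_const (Z : SComplex V) (mZ : Finset V → ℝ) (v u : V) :
    Z.wt mZ (Fin.cons v (Function.const (Fin 1) u) : Fin 2 → V) = Z.edgeWt mZ u v := by
  have himage : image (Fin.cons v (Function.const (Fin 1) u) : Fin 2 → V) univ = {u, v} := by
    ext x
    simp [Fin.exists_fin_two, or_comm, eq_comm]
  simp [wt, IsOSimp, edgeWt, himage, Fin.cons_injective_iff, ne_comm,
    Function.injective_of_subsingleton]

theorem dOp_cons_const {W : Type} (φ : (Fin 1 → W) → ℝ) (v u : W) :
    dOp φ (Fin.cons v (Function.const (Fin 1) u))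
      = φ (Function.const _ u) - φ (Function.const _ v) := by
  have h0 : Fin.cons v (Function.const (Fin 1) u) ∘ (0 : Fin 2).succAbove = Function.const _ u :=
    rfl
  have h1 : Fin.cons v (Function.const (Fin 1) u) ∘ (1 : Fin 2).succAbove = Function.const _ v :=
    funext fun i => by rw [Subsingleton.elim i 0]; rfl
  simp only [dOp, Fin.sum_univ_succ, Fin.sum_univ_zero, Fin.succ_zero_eq_one, h0, h1]
  norm_num
  ring

theorem lapPlus_one_const (hbal : Z.IsVertexBalanced mZ) (φ : (Fin 1 → V) → ℝ) (u : V) :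
    Z.lapPlus mZ 1 φ (Function.const _ u)
      = lap (Z.edgeWt mZ) (fun v => φ (Function.const _ v)) u / deg (Z.edgeWt mZ) u := by
  simp only [lapPlus, deltaOp, wt_cons_const, dOp_cons_const, wt_const, ← hbal.deg_edgeWt, lap,
    sum_div]
  exact sum_congr rfl fun v _ => by ring

theorem specLapPlus_one_subset_spec (hpos : ∀ t ∈ Z.faces, 0 < mZ t)
    (hbal : Z.IsVertexBalanced mZ) : Z.specLapPlus mZ 1 ⊆ spec (Z.edgeWt mZ) := by
  rintro μ ⟨φ, ⟨-, hsupp⟩, hφ, heq⟩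
  obtain ⟨σ, hσ⟩ := Function.ne_iff.mp hφ
  rw [eq_const_of_subsingleton σ 0] at hσ
  refine ⟨fun v => φ (Function.const _ v), ⟨σ 0, ?_, hσ⟩, fun u => ?_⟩
  · refine (hbal.deg_edgeWt_ne_zero_iff hpos).mpr (not_not.mp fun h => hσ (hsupp _ ?_))
    rwa [isOSimp_const_iff]
  · have hu := congrFun heq (Function.const _ u)
    rw [lapPlus_one_const hbal, Pi.smul_apply, smul_eq_mul] at hu
    by_cases hdu : deg (Z.edgeWt mZ) u = 0
    · simp [WeightedGraph.lap_eq_zero_of_deg_eq_zero (edgeWt_nonneg hpos) hdu, hdu]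
    · rw [div_eq_iff hdu] at hu
      rw [hu]
      ring

theorem spec_subset_specLapPlus_one (hpos : ∀ t ∈ Z.faces, 0 < mZ t)
    (hbal : Z.IsVertexBalanced mZ) : spec (Z.edgeWt mZ) ⊆ Z.specLapPlus mZ 1 := by
  rintro μ ⟨g, ⟨u₀, hu₀, hgu₀⟩, hg⟩
  have hvert : ∀ u, _ ↔ _ := fun u => hbal.deg_edgeWt_ne_zero_iff hpos (u := u)
  have hrestrict : ∀ u, deg (Z.edgeWt mZ) u ≠ 0 →
      Z.restrict (fun σ => g (σ 0)) (Function.const _ u) = g u :=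
    fun u hu => if_pos ((isOSimp_const_iff Z u).mpr ((hvert u).mp hu))
  refine ⟨Z.restrict fun σ => g (σ 0), ⟨fun σ π => ?_, fun σ hσ => if_neg hσ⟩,
    fun h => ?_, ?_⟩
  · simp [Subsingleton.elim π 1]
  · exact hgu₀ ((hrestrict u₀ hu₀).symm.trans (congrFun h _))
  · funext σ
    rw [eq_const_of_subsingleton σ 0, lapPlus_one_const hbal, Pi.smul_apply, smul_eq_mul]
    by_cases hdu : deg (Z.edgeWt mZ) (σ 0) = 0
    · have : ({σ 0} : Finset V) ∉ Z.faces := fun h => (hvert _).mpr h hdu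
      simp [hdu, restrict, isOSimp_const_iff, this]
    · rw [WeightedGraph.lap_congr (Z.edgeWt_comm mZ) (edgeWt_nonneg hpos) hrestrict hdu, hg,
        hrestrict _ hdu]
      field_simp

theorem specLapPlus_one_eq_spec (hpos : ∀ t ∈ Z.faces, 0 < mZ t)
    (hbal : Z.IsVertexBalanced mZ) : Z.specLapPlus mZ 1 = spec (Z.edgeWt mZ) :=
  (specLapPlus_one_subset_spec hpos hbal).antisymm (spec_subset_specLapPlus_one hpos hbal)

end EdgeWeights

section Links

variable {X : SComplex V} {s : Finset V}

theorem faces_injective : Function.Injective (faces : SComplex V → Finset (Finset V)) := by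
  rintro ⟨_, _, _⟩ ⟨_, _, _⟩ h
  cases h
  rfl

theorem mem_link_faces {t : Finset V} :
    t ∈ (X.link s).faces ↔ t = ∅ ∨ (Disjoint s t ∧ s ∪ t ∈ X.faces) := by
  simp only [link, mem_insert, mem_filter]
  exact or_congr_right
    ⟨fun h => h.2, fun h => ⟨X.down_closed _ h.2 _ subset_union_right, h⟩⟩

theorem singleton_mem_link {u : V} :
    ({u} : Finset V) ∈ (X.link s).faces ↔ u ∉ s ∧ insert u s ∈ X.faces := by
  simp [mem_link_faces, union_comm s]

theorem pair_mem_link {u x : V} :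
    ({u, x} : Finset V) ∈ (X.link s).faces ↔
      u ∉ s ∧ x ∉ s ∧ insert u (insert x s) ∈ X.faces := by
  simp [mem_link_faces, union_comm s, and_assoc]

theorem link_link {v : V} (hv : v ∉ s) : (X.link s).link {v} = X.link (insert v s) := by
  refine faces_injective (ext fun t => ?_)
  simp only [mem_link_faces, ← insert_eq, insert_ne_empty, false_or, disjoint_insert_left,
    disjoint_insert_right, disjoint_singleton_left, insert_union, union_insert, hv,
    not_false_eq_true, true_and]
  tauto

theorem linkWt_linkWt {W : Type} [DecidableEq W] (m : Finset W → ℝ) (s : Finset W) (v : W) :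
    linkWt (linkWt m s) {v} = linkWt m (insert v s) := by
  funext t
  simp only [linkWt, insert_eq, union_assoc, union_left_comm s]

theorem linkWt_pos {m : Finset V → ℝ} (hpos : ∀ t ∈ X.faces, 0 < m t) (hs : s ∈ X.faces) :
    ∀ t ∈ (X.link s).faces, 0 < linkWt m s t := by
  intro t ht
  rcases mem_link_faces.mp ht with rfl | ⟨-, ht⟩
  · simpa [linkWt] using hpos s hs
  · exact hpos _ ht

theorem IsBalanced.eq_sum_insert {n : ℕ} {m : Finset V → ℝ} (hm : X.IsBalanced n m)
    {r : Finset V} (hr : r ∈ X.faces) (hcard : r.card ≤ n) :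
    m r = ∑ v, if v ∉ r ∧ insert v r ∈ X.faces then m (insert v r) else 0 := by
  have himage : X.faces.filter (fun t => r ⊆ t ∧ t.card = r.card + 1)
      = (univ.filter fun v => v ∉ r ∧ insert v r ∈ X.faces).image (insert · r) := by
    ext t
    simp only [mem_filter, mem_image, mem_univ, true_and]
    constructor
    · rintro ⟨ht, hrt, hcard⟩
      obtain ⟨v, hv, rfl⟩ := exists_eq_insert_iff.mpr ⟨hrt, hcard.symm⟩
      exact ⟨v, ⟨hv, ht⟩, rfl⟩
    · rintro ⟨v, ⟨hv, ht⟩, rfl⟩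
      exact ⟨ht, subset_insert v r, card_insert_of_notMem hv⟩
  rw [hm.2 r hr hcard, himage,
    sum_image fun v hv w _ h => (insert_inj (mem_filter.mp hv).2.1).mp h, sum_filter]

theorem IsBalanced.isVertexBalanced_link {n : ℕ} {m : Finset V → ℝ} (hm : X.IsBalanced n m)
    (hcard : s.card < n) : (X.link s).IsVertexBalanced (linkWt m s) := by
  intro u hu
  obtain ⟨hus, hu⟩ := singleton_mem_link.mp hu
  rw [linkWt, union_comm, ← insert_eq,
    hm.eq_sum_insert hu (by rw [card_insert_of_notMem hus]; omega)]
  refine sum_congr rfl fun v _ => ?_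
  have hset : s ∪ {u, v} = insert u (insert v s) := by
    rw [union_comm, insert_union, ← insert_eq]
  rw [edgeWt, linkWt, hset, insert_comm v u]
  refine if_congr ?_ rfl rfl
  rw [pair_mem_link]
  simp only [mem_insert, not_or, ne_comm (a := u)]
  tauto

theorem edgeWt_link_singleton (Y : SComplex V) (mY : Finset V → ℝ) (v u x : V) :
    (Y.link {v}).edgeWt (linkWt mY {v}) u x
      = if v ≠ u ∧ v ≠ x ∧ u ≠ x ∧ ({v, u, x} : Finset V) ∈ Y.faces then mY {v, u, x}
        else 0 := by
  have hset : insert u (insert x {v}) = ({v, u, x} : Finset V) := by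
    rw [pair_comm x v, insert_comm]
  rw [edgeWt, linkWt, ← insert_eq]
  refine if_congr ?_ rfl rfl
  rw [pair_mem_link, hset]
  simp only [mem_singleton, ne_comm (a := v)]
  tauto

theorem deg_edgeWt_link_singleton {Y : SComplex V} {mY : Finset V → ℝ}
    (hbal : ∀ v, ({v} : Finset V) ∈ Y.faces → (Y.link {v}).IsVertexBalanced (linkWt mY {v}))
    (u x : V) : deg ((Y.link {u}).edgeWt (linkWt mY {u})) x = Y.edgeWt mY u x := by
  have hx : ({x} : Finset V) ∈ (Y.link {u}).faces ↔
      u ≠ x ∧ ({u, x} : Finset V) ∈ Y.faces := by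
    rw [singleton_mem_link, mem_singleton, ne_comm, pair_comm]
  by_cases h : u ≠ x ∧ ({u, x} : Finset V) ∈ Y.faces
  · have hu : ({u} : Finset V) ∈ Y.faces := Y.down_closed _ h.2 _ (by simp)
    rw [← hbal u hu x (hx.mpr h), linkWt, edgeWt, if_pos h, ← insert_eq]
  · rw [edgeWt, if_neg h, deg_edgeWt_eq_zero _ _ (hx.not.mpr h)]

end Links

theorem specLapPlus_one_diff_zero_subset_of_links {Y : SComplex V} {mY : Finset V → ℝ}
    {lam kap : ℝ} (hlam : 0 < lam) (hlk : lam ≤ kap) (hpos : ∀ t ∈ Y.faces, 0 < mY t)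
    (hbal : Y.IsVertexBalanced mY)
    (hbal_link : ∀ v, ({v} : Finset V) ∈ Y.faces →
      (Y.link {v}).IsVertexBalanced (linkWt mY {v}))
    (hconn : ∀ v, ({v} : Finset V) ∈ Y.faces → (Y.link {v}).SkelConnected)
    (hgap : ∀ v, ({v} : Finset V) ∈ Y.faces →
      (Y.link {v}).specLapPlus (linkWt mY {v}) 1 \ {0} ⊆ Set.Icc lam kap) :
    Y.specLapPlus mY 1 \ {0} ⊆ Set.Icc (2 - 1 / lam) (2 - 1 / kap) := by
  set c : V → V → V → ℝ := fun v => (Y.link {v}).edgeWt (linkWt mY {v})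
  have hc : ∀ v u x, c v u x
      = if v ≠ u ∧ v ≠ x ∧ u ≠ x ∧ ({v, u, x} : Finset V) ∈ Y.faces then mY {v, u, x}
        else 0 :=
    edgeWt_link_singleton Y mY
  have hvert : ∀ v, c v ≠ 0 → ({v} : Finset V) ∈ Y.faces := by
    intro v hv
    obtain ⟨u, x, hux⟩ : ∃ u x, c v u x ≠ 0 := by
      by_contra! h
      exact hv (funext fun u => funext (h u))
    rw [hc] at hux
    exact Y.down_closed _ (of_not_not fun h => hux (if_neg fun h' => h h'.2.2.2)) _ (by simp)
  have hpos_link : ∀ v, c v ≠ 0 → ∀ t ∈ (Y.link {v}).faces, 0 < linkWt mY {v} t :=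
    fun v hv => linkWt_pos hpos (hvert v hv)
  have hedge : Y.edgeWt mY = fun u => deg (c u) :=
    funext fun u => funext fun x => (deg_edgeWt_link_singleton hbal_link u x).symm
  rw [specLapPlus_one_eq_spec hpos hbal, hedge]
  refine WeightedGraph.spec_diff_zero_subset_of_links (fun v u x => ?_) (fun v u x => ?_)
    (fun v u x => ?_) hlam hlk (fun v hv => ?_) (fun v hv => ?_)
  · rw [hc]
    split_ifs with h
    exacts [(hpos _ h.2.2.2).le, le_rfl]
  · rw [hc, hc, insert_comm]
    exact if_congr ⟨fun ⟨h₁, h₂, h₃, h⟩ => ⟨h₁.symm, h₃, h₂, h⟩,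
      fun ⟨h₁, h₂, h₃, h⟩ => ⟨h₁.symm, h₃, h₂, h⟩⟩ rfl rfl
  · rw [hc, hc, pair_comm]
    exact if_congr ⟨fun ⟨h₁, h₂, h₃, h⟩ => ⟨h₂, h₁, h₃.symm, h⟩,
      fun ⟨h₁, h₂, h₃, h⟩ => ⟨h₂, h₁, h₃.symm, h⟩⟩ rfl rfl
  · exact (hconn v (hvert v hv)).connected_edgeWt (hpos_link v hv)
  · rw [← specLapPlus_one_eq_spec (hpos_link v hv) (hbal_link v (hvert v hv))]
    exact hgap v (hvert v hv)

theorem IsOSimp.cons {X : SComplex V} {k : ℕ} {τ : Fin k → V} (hτ : X.IsOSimp τ) {v : V}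
    (hv : v ∉ image τ univ) (hface : insert v (image τ univ) ∈ X.faces) :
    X.IsOSimp (Fin.cons v τ : Fin (k + 1) → V) :=
  ⟨Fin.cons_injective_iff.mpr
      ⟨fun ⟨i, hi⟩ => hv (mem_image.mpr ⟨i, mem_univ i, hi⟩), hτ.1⟩,
    by rwa [image_univ_cons]⟩

end SComplex

theorem one_step_descent_of_spectral_gaps_general
    (X : SComplex V) (n : ℕ) (m : Finset V → ℝ)
    (hn : 1 < n) (hm : X.IsBalanced n m)
    (hconn : X.AllLinksConnected n)
    (k : ℕ) (hk : k ≤ n - 2)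
    (lam kap : ℝ) (hlam : 0 < lam) (hlk : lam ≤ kap)
    (hspec : ∀ σ : Fin (k + 1) → V, X.IsOSimp σ →
      (X.link (Finset.image σ Finset.univ)).specLapPlus
          (linkWt m (Finset.image σ Finset.univ)) 1 \ {0} ⊆ Set.Icc lam kap) :
    ∀ τ : Fin k → V, X.IsOSimp τ →
      (X.link (Finset.image τ Finset.univ)).specLapPlus
          (linkWt m (Finset.image τ Finset.univ)) 1 \ {0} ⊆
        Set.Icc (2 - 1 / lam) (2 - 1 / kap) := by
  intro τ hτ
  set s := image τ univ
  have hcard : s.card = k := by rw [card_image_of_injective _ hτ.1, card_univ, Fintype.card_fin]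
  have hcard_insert : ∀ v ∉ s, (insert v s).card < n := fun v hv => by
    rw [card_insert_of_notMem hv]; omega
  refine specLapPlus_one_diff_zero_subset_of_links hlam hlk (linkWt_pos hm.1 hτ.2)
    (hm.isVertexBalanced_link (by omega)) (fun v hv => ?_) (fun v hv => ?_) (fun v hv => ?_) <;>
  obtain ⟨hvs, hv⟩ := singleton_mem_link.mp hv <;>
  rw [link_link hvs]
  · rw [linkWt_linkWt]
    exact hm.isVertexBalanced_link (hcard_insert v hvs)
  · exact hconn.2 _ hv (hcard_insert v hvs)
  · simpa [linkWt_linkWt, image_univ_cons] using hspec _ (hτ.cons hvs hv)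

/-- Lemma 4.1: one-step descent of the two-sided spectral gap. -/
theorem one_step_descent_of_spectral_gaps
    (X : SComplex V) (n : ℕ) (m : Finset V → ℝ)
    (hn : 1 < n) (hpure : X.Pure n) (hm : X.IsBalanced n m)
    (hconn : X.AllLinksConnected n)
    (k : ℕ) (hk : k ≤ n - 2)
    (lam kap : ℝ) (hlam : 0 < lam) (hlk : lam ≤ kap)
    (hspec : ∀ σ : Fin (k + 1) → V, X.IsOSimp σ →
      (X.link (Finset.image σ Finset.univ)).specLapPlus
          (linkWt m (Finset.image σ Finset.univ)) 1 \ {0} ⊆ Set.Icc lam kap) :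
    ∀ τ : Fin k → V, X.IsOSimp τ →
      (X.link (Finset.image τ Finset.univ)).specLapPlus
          (linkWt m (Finset.image τ Finset.univ)) 1 \ {0} ⊆
        Set.Icc (2 - 1 / lam) (2 - 1 / kap) :=
  one_step_descent_of_spectral_gaps_general X n m hn hm hconn k hk lam kap hlam hlk hspec
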